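/- Let d ≥ 1, κ ≥ 2d, and let α₁, α₂ : ℝ^{2d} → ℂ be continuously differentiable with ‖α_i‖_{A^{κ,2}} < ∞ and ‖∇_v α_i‖_{A^{κ,2}} < ∞. Define φ_i(x) := ∫_{ℝ^d} conj(α_i)(x,v) ∇_v α_i(x,v) dv. Then ‖φ₁ − φ₂‖_{L¹(ℝ^d)} ≤ (‖∇_v α₁‖_{A^{κ,2}} + ‖∇_v α₂‖_{A^{κ,2}}) ‖α₁ − α₂‖_{A^{κ,2}}. -/

import Mathlib

open MeasureTheory
open scoped ENNReal NNReal

/-- `ℝ^d` as a Euclidean space. -/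
abbrev E (d : ℕ) : Type := EuclideanSpace ℝ (Fin d)

/-- The `A^{κ,p}` norm: `sup_{R ≥ 0} (1+R)^{-κ/p} (∫ sup_{|z̄| ≤ R} ‖f(z+z̄)‖^p dz)^{1/p}`. -/
noncomputable def Anorm {G F : Type*} [NormedAddCommGroup G] [MeasureSpace G]
    [NormedAddCommGroup F] (κ p : ℝ) (f : G → F) : ℝ≥0∞ :=
  ⨆ R : NNReal, (ENNReal.ofReal (1 + (R : ℝ))) ^ (-(κ / p)) *
    (∫⁻ z, ⨆ w ∈ Metric.closedBall (0 : G) (R : ℝ),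
      ENNReal.ofReal (‖f (z + w)‖ ^ p)) ^ (1 / p)

/-- The velocity gradient `∇ᵥα` of a function on phase space, as a continuous linear map. -/
noncomputable def gradV (d : ℕ) (α : E d × E d → ℂ) (z : E d × E d) : E d →L[ℝ] ℂ :=
  fderiv ℝ (fun w : E d => α (z.1, w)) z.2

/-- The phase density `φ(x) = ∫ conj(α)(x,v) ∇ᵥα(x,v) dv`. -/
noncomputable def phaseDensity (d : ℕ) (α : E d × E d → ℂ) (x : E d) : E d →L[ℝ] ℂ :=
  ∫ v : E d, (starRingEnd ℂ) (α (x, v)) • gradV d α (x, v)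

/-!
Write `β = α₁ - α₂`. On each fibre `{x} × ℝ^d`,
`conj α₁ ∇ᵥα₁ - conj α₂ ∇ᵥα₂ = conj β ∇ᵥα₁ + conj α₂ ∇ᵥβ`, and integrating the last term by
parts in `v` turns it into `-β conj(∇ᵥα₂)`. Hence `|φ₁ - φ₂|(x) ≤ ∫ |β| (|∇ᵥα₁| + |∇ᵥα₂|) dv`;
integrating in `x` and applying Cauchy–Schwarz on phase space bounds the `L¹` norm by
`‖β‖_{L²} (‖∇ᵥα₁‖_{L²} + ‖∇ᵥα₂‖_{L²})`, and the `L²` norm is the `R = 0` term of the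
`A^{κ,2}` norm. Square integrability on phase space also gives it on almost every fibre, which
justifies the integration by parts there.
-/

namespace MeasureTheory

theorem MemLp.prod_right_ae {X Y F : Type*} [MeasurableSpace X] [MeasurableSpace Y]
    [NormedAddCommGroup F] {μ : Measure X} {ν : Measure Y} [SFinite μ] [SFinite ν]
    {p : ℝ≥0∞} (hp0 : p ≠ 0) (hp : p ≠ ∞) {f : X × Y → F} (hf : MemLp f p (μ.prod ν)) :
    ∀ᵐ x ∂μ, MemLp (fun y => f (x, y)) p ν := by
  filter_upwards [hf.1.prodMk_left, ((integrable_norm_rpow_iff hf.1 hp0 hp).2 hf).prod_right_ae]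
    with x hmeas hint
  exact (integrable_norm_rpow_iff hmeas hp0 hp).1 hint

section LTwo
variable {X F G : Type*} [MeasurableSpace X] {μ : Measure X} [NormedAddCommGroup F]
  [NormedAddCommGroup G]

lemma MemLp.integrable_smul_of_two [NormedSpace ℂ G] {φ : X → ℂ} {g : X → G}
    (hφ : MemLp φ 2 μ) (hg : MemLp g 2 μ) : Integrable (fun x => φ x • g x) μ :=
  memLp_one_iff_integrable.1 (hg.smul hφ)

lemma lintegral_enorm_mul_le_eLpNorm_two_mul {f : X → F} {g : X → G}
    (hf : AEStronglyMeasurable f μ) (hg : AEStronglyMeasurable g μ) :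
    ∫⁻ x, ‖f x‖ₑ * ‖g x‖ₑ ∂μ ≤ eLpNorm f 2 μ * eLpNorm g 2 μ := by
  simpa [eLpNorm_eq_lintegral_rpow_enorm_toReal] using
    ENNReal.lintegral_mul_le_Lp_mul_Lq μ Real.HolderConjugate.two_two hf.enorm hg.enorm

lemma lintegral_enorm_mul_add_le_eLpNorm_two_mul {f : X → F} {g₁ g₂ : X → G}
    (hf : AEStronglyMeasurable f μ) (hg₁ : AEStronglyMeasurable g₁ μ)
    (hg₂ : AEStronglyMeasurable g₂ μ) :
    ∫⁻ x, ‖f x‖ₑ * (‖g₁ x‖ₑ + ‖g₂ x‖ₑ) ∂μ ≤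
      eLpNorm f 2 μ * (eLpNorm g₁ 2 μ + eLpNorm g₂ 2 μ) := by
  simp only [mul_add]
  rw [lintegral_add_left' (f := fun x => ‖f x‖ₑ * ‖g₁ x‖ₑ) (hf.enorm.mul hg₁.enorm)]
  exact add_le_add (lintegral_enorm_mul_le_eLpNorm_two_mul hf hg₁)
    (lintegral_enorm_mul_le_eLpNorm_two_mul hf hg₂)

end LTwo

end MeasureTheory

section Anorm
variable {G F : Type*} [NormedAddCommGroup G] [MeasureSpace G] [NormedAddCommGroup F]

lemma eLpNorm_le_Anorm {p : ℝ} (hp : 0 < p) (κ : ℝ) (f : G → F) :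
    eLpNorm f (ENNReal.ofReal p) volume ≤ Anorm κ p f := by
  refine le_trans (le_of_eq ?_) (le_iSup _ (0 : ℝ≥0))
  simp [eLpNorm_eq_lintegral_rpow_enorm_toReal, hp, hp.le, ← ofReal_norm,
    ENNReal.ofReal_rpow_of_nonneg]

lemma eLpNorm_two_le_Anorm (κ : ℝ) (f : G → F) : eLpNorm f 2 volume ≤ Anorm κ 2 f := by
  simpa using eLpNorm_le_Anorm two_pos κ f

lemma memLp_two_of_Anorm_lt_top {κ : ℝ} {f : G → F} (hf : AEStronglyMeasurable f volume)
    (h : Anorm κ 2 f < ⊤) : MemLp f 2 volume :=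
  ⟨hf, (eLpNorm_two_le_Anorm κ f).trans_lt h⟩

end Anorm

section Fiber
variable {V : Type*} [NormedAddCommGroup V] [NormedSpace ℝ V]

open ComplexConjugate

lemma norm_conjCLE_comp (L : V →L[ℝ] ℂ) : ‖(Complex.conjCLE : ℂ →L[ℝ] ℂ) ∘L L‖ = ‖L‖ :=
  Complex.conjLIE.toLinearIsometry.norm_toContinuousLinearMap_comp

lemma enorm_conj_smul_sub_smul_conjCLE_comp_le (b : ℂ) (A B : V →L[ℝ] ℂ) :
    ‖conj b • A - b • ((Complex.conjCLE : ℂ →L[ℝ] ℂ) ∘L B)‖ₑ ≤ ‖b‖ₑ * (‖A‖ₑ + ‖B‖ₑ) :=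
  calc _ ≤ ‖conj b • A‖ₑ + ‖b • ((Complex.conjCLE : ℂ →L[ℝ] ℂ) ∘L B)‖ₑ := enorm_sub_le
    _ = ‖b‖ₑ * (‖A‖ₑ + ‖B‖ₑ) := by
      rw [enorm_smul, enorm_smul, mul_add, ← ofReal_norm (_ ∘L B), norm_conjCLE_comp, ofReal_norm]
      simp

variable [FiniteDimensional ℝ V] [MeasurableSpace V] [BorelSpace V] {μ : Measure V}
  [μ.IsAddHaarMeasure]

lemma integral_conj_smul_fderiv_eq_neg {f g : V → ℂ} (hf : Differentiable ℝ f)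
    (hg : Differentiable ℝ g) (hfg : Integrable (fun v => conj (f v) * g v) μ)
    (hfDg : Integrable (fun v => conj (f v) • fderiv ℝ g v) μ)
    (hDfg : Integrable (fun v => g v • ((Complex.conjCLE : ℂ →L[ℝ] ℂ) ∘L fderiv ℝ f v)) μ) :
    ∫ v, conj (f v) • fderiv ℝ g v ∂μ =
      -∫ v, g v • ((Complex.conjCLE : ℂ →L[ℝ] ℂ) ∘L fderiv ℝ f v) ∂μ := by
  ext e
  have := integral_bilinear_fderiv_right_eq_neg_left_of_integrable (μ := μ) (v := e)
    (B := ContinuousLinearMap.mul ℝ ℂ ∘L (Complex.conjCLE : ℂ →L[ℝ] ℂ))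
    (by simpa [mul_comm] using hDfg.apply_continuousLinearMap e)
    (by simpa using hfDg.apply_continuousLinearMap e) (by simpa using hfg)
    (fun v _ => hf v) (fun v _ => hg v)
  simpa [ContinuousLinearMap.integral_apply hfDg, ContinuousLinearMap.integral_apply hDfg,
    mul_comm] using this

theorem enorm_integral_conj_smul_fderiv_sub_le {f g : V → ℂ} (hf : Differentiable ℝ f)
    (hg : Differentiable ℝ g) (hf₂ : MemLp f 2 μ) (hg₂ : MemLp g 2 μ)
    (hDf : MemLp (fderiv ℝ f) 2 μ) (hDg : MemLp (fderiv ℝ g) 2 μ) :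
    ‖(∫ v, conj (f v) • fderiv ℝ f v ∂μ) - ∫ v, conj (g v) • fderiv ℝ g v ∂μ‖ₑ ≤
      ∫⁻ v, ‖f v - g v‖ₑ * (‖fderiv ℝ f v‖ₑ + ‖fderiv ℝ g v‖ₑ) ∂μ := by
  set conjL : ℂ →L[ℝ] ℂ := ↑Complex.conjCLE
  have hfg₂ : MemLp (fun v => f v - g v) 2 μ := hf₂.sub hg₂
  have hDfg : fderiv ℝ (fun v => f v - g v) = fun v => fderiv ℝ f v - fderiv ℝ g v :=
    funext fun v => fderiv_fun_sub (hf v) (hg v)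
  have hconjDg : MemLp (fun v => conjL ∘L fderiv ℝ g v) 2 μ :=
    hDg.of_le ((continuous_const.clm_comp continuous_id).comp_aestronglyMeasurable hDg.1)
      (.of_forall fun v => (norm_conjCLE_comp _).le)
  have hDfg₂ : MemLp (fderiv ℝ (fun v => f v - g v)) 2 μ := hDfg ▸ hDf.sub hDg
  have hcf : MemLp (fun v => conj (f v)) 2 μ := hf₂.star
  have hcg : MemLp (fun v => conj (g v)) 2 μ := hg₂.star
  have hcfg : MemLp (fun v => conj (f v - g v)) 2 μ := hfg₂.star
  have hsplit : ∀ v, conj (f v) • fderiv ℝ f v - conj (g v) • fderiv ℝ g v =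
      conj (f v - g v) • fderiv ℝ f v + conj (g v) • fderiv ℝ (fun v => f v - g v) v := by
    intro v
    simp only [hDfg, map_sub]
    module
  have hibp := integral_conj_smul_fderiv_eq_neg (μ := μ) (g := fun v => f v - g v) hg
    (hf.sub hg) (hcg.integrable_mul hfg₂) (hcg.integrable_smul_of_two hDfg₂)
    (hfg₂.integrable_smul_of_two hconjDg)
  calc _ = ‖∫ v, conj (f v - g v) • fderiv ℝ f v - (f v - g v) • (conjL ∘L fderiv ℝ g v) ∂μ‖ₑ := by
        rw [← integral_sub (hcf.integrable_smul_of_two hDf)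
          (hcg.integrable_smul_of_two hDg), integral_congr_ae (.of_forall hsplit),
          integral_add (hcfg.integrable_smul_of_two hDf)
            (hcg.integrable_smul_of_two hDfg₂), hibp, ← sub_eq_add_neg,
          integral_sub (hcfg.integrable_smul_of_two hDf)
            (hfg₂.integrable_smul_of_two hconjDg)]
    _ ≤ _ := enorm_integral_le_lintegral_enorm _
    _ ≤ _ := lintegral_mono fun v => enorm_conj_smul_sub_smul_conjCLE_comp_le _ _ _

end Fiber

lemma ContDiff.differentiable_slice {X Y Z : Type*} [NormedAddCommGroup X] [NormedSpace ℝ X]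
    [NormedAddCommGroup Y] [NormedSpace ℝ Y] [NormedAddCommGroup Z] [NormedSpace ℝ Z]
    {α : X × Y → Z} (hα : ContDiff ℝ 1 α) (x : X) : Differentiable ℝ (fun y => α (x, y)) :=
  (hα.comp (contDiff_prodMk_right x)).differentiable one_ne_zero

section gradV
variable {d : ℕ} {α : E d × E d → ℂ}

lemma gradV_eq_fderiv_comp_inr (hα : ContDiff ℝ 1 α) (z : E d × E d) :
    gradV d α z = fderiv ℝ α z ∘L ContinuousLinearMap.inr ℝ (E d) (E d) :=
  ((hα.differentiable one_ne_zero z).hasFDerivAt.comp z.2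
    ((hasFDerivAt_const z.1 z.2).prodMk (hasFDerivAt_id z.2))).fderiv

lemma continuous_gradV (hα : ContDiff ℝ 1 α) : Continuous (gradV d α) := by
  simp_rw [funext (gradV_eq_fderiv_comp_inr hα)]
  exact (hα.continuous_fderiv one_ne_zero).clm_comp continuous_const

end gradV

theorem statement16 (d : ℕ) (κ : ℝ)
    (α₁ α₂ : E d × E d → ℂ) (hs₁ : ContDiff ℝ 1 α₁) (hs₂ : ContDiff ℝ 1 α₂)
    (hf₁ : Anorm κ 2 α₁ < ⊤) (hf₂ : Anorm κ 2 α₂ < ⊤)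
    (hg₁ : Anorm κ 2 (gradV d α₁) < ⊤) (hg₂ : Anorm κ 2 (gradV d α₂) < ⊤) :
    (∫⁻ x : E d, ENNReal.ofReal ‖phaseDensity d α₁ x - phaseDensity d α₂ x‖) ≤
      (Anorm κ 2 (gradV d α₁) + Anorm κ 2 (gradV d α₂)) * Anorm κ 2 (α₁ - α₂) := by
  have hG₁ := (continuous_gradV hs₁).aestronglyMeasurable (μ := volume)
  have hG₂ := (continuous_gradV hs₂).aestronglyMeasurable (μ := volume)
  have hα₁ := memLp_two_of_Anorm_lt_top hs₁.continuous.aestronglyMeasurable hf₁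
  have hα₂ := memLp_two_of_Anorm_lt_top hs₂.continuous.aestronglyMeasurable hf₂
  have hβ := (hs₁.continuous.sub hs₂.continuous).aestronglyMeasurable (μ := volume)
  rw [Measure.volume_eq_prod] at hα₁ hα₂
  have hslices : ∀ᵐ x : E d, MemLp (fun v => α₁ (x, v)) 2 ∧ MemLp (fun v => α₂ (x, v)) 2 ∧
      MemLp (fun v => gradV d α₁ (x, v)) 2 ∧ MemLp (fun v => gradV d α₂ (x, v)) 2 := by
    have hDα₁ := memLp_two_of_Anorm_lt_top hG₁ hg₁
    have hDα₂ := memLp_two_of_Anorm_lt_top hG₂ hg₂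
    rw [Measure.volume_eq_prod] at hDα₁ hDα₂
    filter_upwards [hα₁.prod_right_ae two_ne_zero ENNReal.ofNat_ne_top,
      hα₂.prod_right_ae two_ne_zero ENNReal.ofNat_ne_top,
      hDα₁.prod_right_ae two_ne_zero ENNReal.ofNat_ne_top,
      hDα₂.prod_right_ae two_ne_zero ENNReal.ofNat_ne_top] with x h₁ h₂ h₃ h₄
    exact ⟨h₁, h₂, h₃, h₄⟩
  calc (∫⁻ x : E d, ENNReal.ofReal ‖phaseDensity d α₁ x - phaseDensity d α₂ x‖)
      ≤ ∫⁻ x, ∫⁻ v, ‖(α₁ - α₂) (x, v)‖ₑ * (‖gradV d α₁ (x, v)‖ₑ + ‖gradV d α₂ (x, v)‖ₑ) := by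
        refine lintegral_mono_ae ?_
        filter_upwards [hslices] with x ⟨h₁, h₂, h₃, h₄⟩
        rw [ofReal_norm]
        exact enorm_integral_conj_smul_fderiv_sub_le (hs₁.differentiable_slice x)
          (hs₂.differentiable_slice x) h₁ h₂ h₃ h₄
    _ = ∫⁻ z, ‖(α₁ - α₂) z‖ₑ * (‖gradV d α₁ z‖ₑ + ‖gradV d α₂ z‖ₑ) := by
        rw [Measure.volume_eq_prod, lintegral_prod]
        exact hβ.enorm.mul (hG₁.enorm.add hG₂.enorm)
    _ ≤ eLpNorm (α₁ - α₂) 2 volume *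
          (eLpNorm (gradV d α₁) 2 volume + eLpNorm (gradV d α₂) 2 volume) :=
        lintegral_enorm_mul_add_le_eLpNorm_two_mul hβ hG₁ hG₂
    _ ≤ Anorm κ 2 (α₁ - α₂) * (Anorm κ 2 (gradV d α₁) + Anorm κ 2 (gradV d α₂)) := by
        gcongr <;> exact eLpNorm_two_le_Anorm κ _
    _ = _ := mul_comm _ _
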